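/- For 0 < a < 1, the integral ∫_0^a (4x^2/(1+x)) f_K(x;a) dx equals N(a) = (π a^2 - 2a sqrt(1-a^2) + 2(1-2a^2) arcsin(a)) / (π (1-a^2)). -/

import Mathlib

/-!
The integral is evaluated by the fundamental theorem of calculus with an explicit primitive.
By partial fractions, `4x²/((1+x)²(1-x)) = 1/(1-x) - 3/(1+x) + 2/(1+x)²`, and the three pieces,
divided by `√(a²-x²)`, integrate as follows: the substitution `u = (a² + x)/(a(1 + x))` gives
`∫ dx/((1+x)√(a²-x²)) = arcsin u / √(1-a²)`, reflection `x ↦ -x` handles `1/(1-x)`, and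
`d/dx (√(a²-x²)/(1+x)) = (1-a²)/((1+x)²√(a²-x²)) - 1/((1+x)√(a²-x²))` reduces `1/(1+x)²` to
`1/(1+x)`. The primitive stays continuous up to the endpoint `x = a`, where the integrand blows
up, and since the integrand is nonnegative this already makes it integrable.
-/

noncomputable def fK (x a : ℝ) : ℝ :=
  Real.sqrt (1 - a^2) / (Real.pi * (1 - x^2) * Real.sqrt (a^2 - x^2))

noncomputable def N (a : ℝ) : ℝ :=
  (Real.pi * a^2 - 2*a*Real.sqrt (1 - a^2) + 2*(1 - 2*a^2) * Real.arcsin a) /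
    (Real.pi * (1 - a^2))

open Real Set intervalIntegral MeasureTheory

lemma fK_nonneg {x : ℝ} (a : ℝ) (hx : x ^ 2 ≤ 1) : 0 ≤ fK x a := by
  unfold fK
  have : 0 ≤ 1 - x ^ 2 := by linarith
  positivity

noncomputable def survivalPrimitive (a x : ℝ) : ℝ :=
  ((2 / (1 - a ^ 2) - 3) * arcsin ((a ^ 2 + x) / (a * (1 + x)))
    - arcsin ((a ^ 2 - x) / (a * (1 - x)))
    + 2 / √(1 - a ^ 2) * (√(a ^ 2 - x ^ 2) / (1 + x))) / π

section
variable {a x : ℝ}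

lemma hasDerivAt_sqrt_sq_sub_sq_div_one_add (hx : x ^ 2 < a ^ 2) (hx1 : 1 + x ≠ 0) :
    HasDerivAt (fun y => √(a ^ 2 - y ^ 2) / (1 + y))
      (-(a ^ 2 + x) / ((1 + x) ^ 2 * √(a ^ 2 - x ^ 2))) x := by
  have hS : 0 < a ^ 2 - x ^ 2 := by linarith
  refine ((((hasDerivAt_pow 2 x).const_sub (a ^ 2)).sqrt hS.ne').div
    ((hasDerivAt_id' x).const_add 1) hx1).congr_deriv ?_
  have hS' : √(a ^ 2 - x ^ 2) ^ 2 = a ^ 2 - x ^ 2 := sq_sqrt hS.le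
  have : √(a ^ 2 - x ^ 2) ≠ 0 := (sqrt_pos.2 hS).ne'
  field_simp
  rw [hS']
  ring

lemma hasDerivAt_arcsin_sq_add_div (ha : 0 < a) (ha1 : a < 1) (hx : x ∈ Ioo (-a) a) :
    HasDerivAt (fun y => arcsin ((a ^ 2 + y) / (a * (1 + y))))
      (√(1 - a ^ 2) / ((1 + x) * √(a ^ 2 - x ^ 2))) x := by
  obtain ⟨hxl, hxr⟩ := hx
  have h1x : 0 < 1 + x := by linarith
  have hq : 0 < 1 - a ^ 2 := by nlinarith
  have hS : 0 < a ^ 2 - x ^ 2 := by nlinarith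
  have hq' : √(1 - a ^ 2) ^ 2 = 1 - a ^ 2 := sq_sqrt hq.le
  have hS' : √(a ^ 2 - x ^ 2) ^ 2 = a ^ 2 - x ^ 2 := sq_sqrt hS.le
  have hu : HasDerivAt (fun y => (a ^ 2 + y) / (a * (1 + y)))
      ((1 - a ^ 2) / (a * (1 + x) ^ 2)) x := by
    refine (((hasDerivAt_id' x).const_add (a ^ 2)).div
      (((hasDerivAt_id' x).const_add 1).const_mul a) (by positivity)).congr_deriv ?_
    field_simp
    ring
  have hlt : (a ^ 2 + x) / (a * (1 + x)) < 1 := by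
    rw [div_lt_one (by positivity)]; nlinarith
  have hgt : -1 < (a ^ 2 + x) / (a * (1 + x)) := by
    rw [lt_div_iff₀ (by positivity)]; nlinarith
  have hsqrt : √(1 - ((a ^ 2 + x) / (a * (1 + x))) ^ 2)
      = √(1 - a ^ 2) * √(a ^ 2 - x ^ 2) / (a * (1 + x)) := by
    rw [← sqrt_sq (by positivity : 0 ≤ √(1 - a ^ 2) * √(a ^ 2 - x ^ 2) / (a * (1 + x)))]
    congr 1
    field_simp
    rw [hq', hS']
    ring
  refine ((hasDerivAt_arcsin hgt.ne' hlt.ne).comp x hu).congr_deriv ?_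
  rw [hsqrt]
  have : √(a ^ 2 - x ^ 2) ≠ 0 := (sqrt_pos.2 hS).ne'
  field_simp
  rw [hq']

lemma hasDerivAt_arcsin_sq_sub_div (ha : 0 < a) (ha1 : a < 1) (hx : x ∈ Ioo (-a) a) :
    HasDerivAt (fun y => arcsin ((a ^ 2 - y) / (a * (1 - y))))
      (-(√(1 - a ^ 2) / ((1 - x) * √(a ^ 2 - x ^ 2)))) x := by
  have hx' : -x ∈ Ioo (-a) a := ⟨by linarith [hx.2], by linarith [hx.1]⟩
  have h := (hasDerivAt_arcsin_sq_add_div ha ha1 hx').comp x (hasDerivAt_neg x)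
  simp only [neg_sq, ← sub_eq_add_neg, mul_neg_one] at h
  exact h

lemma hasDerivAt_survivalPrimitive (ha : 0 < a) (ha1 : a < 1) (hx : x ∈ Ioo (-a) a) :
    HasDerivAt (survivalPrimitive a) (4 * x ^ 2 / (1 + x) * fK x a) x := by
  have h1x : 0 < 1 + x := by linarith [hx.1]
  have h1x' : 0 < 1 - x := by linarith [hx.2]
  have hq : 0 < 1 - a ^ 2 := by nlinarith
  have hS : 0 < a ^ 2 - x ^ 2 := by nlinarith [hx.1, hx.2]
  refine ((((hasDerivAt_arcsin_sq_add_div ha ha1 hx).const_mul (2 / (1 - a ^ 2) - 3)).sub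
    (hasDerivAt_arcsin_sq_sub_div ha ha1 hx)).add
    ((hasDerivAt_sqrt_sq_sub_sq_div_one_add (by linarith) h1x.ne').const_mul
      (2 / √(1 - a ^ 2)))).div_const π |>.congr_deriv ?_
  have hq' : √(1 - a ^ 2) ^ 2 = 1 - a ^ 2 := sq_sqrt hq.le
  have : √(1 - a ^ 2) ≠ 0 := (sqrt_pos.2 hq).ne'
  have : √(a ^ 2 - x ^ 2) ≠ 0 := (sqrt_pos.2 hS).ne'
  have : 1 - x ^ 2 ≠ 0 := by nlinarith
  rw [fK]
  generalize √(1 - a ^ 2) = q at *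
  generalize √(a ^ 2 - x ^ 2) = S at *
  rw [show a ^ 2 = 1 - q ^ 2 by linarith]
  field_simp
  ring

lemma continuousOn_survivalPrimitive (ha : 0 < a) (ha1 : a < 1) :
    ContinuousOn (survivalPrimitive a) (Icc (-a) a) := by
  unfold survivalPrimitive
  fun_prop (disch := rintro y ⟨h1, h2⟩; apply ne_of_gt; nlinarith)

lemma survivalPrimitive_self (ha : 0 < a) (ha1 : a < 1) :
    survivalPrimitive a a = a ^ 2 / (1 - a ^ 2) := by
  have h1 : (a ^ 2 + a) / (a * (1 + a)) = 1 := by field_simp; ring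
  have h2 : (a ^ 2 - a) / (a * (1 - a)) = -1 := by
    rw [div_eq_iff (by nlinarith)]; ring
  have hq : 1 - a ^ 2 ≠ 0 := by nlinarith
  simp only [survivalPrimitive, h1, h2, arcsin_one, arcsin_neg, sub_self, sqrt_zero, zero_div,
    mul_zero, add_zero]
  field_simp
  ring

lemma survivalPrimitive_zero (ha : 0 < a) :
    survivalPrimitive a 0 =
      ((2 / (1 - a ^ 2) - 4) * arcsin a + 2 * a / √(1 - a ^ 2)) / π := by
  have : a ^ 2 / a = a := by field_simp
  simp [survivalPrimitive, this, sqrt_sq ha.le]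
  ring

end

theorem survival_normalization_integral (a : ℝ) (ha0 : 0 < a) (ha1 : a < 1) :
    ∫ x in (0:ℝ)..a, (4*x^2/(1+x)) * fK x a = N a := by
  have hcont : ContinuousOn (survivalPrimitive a) (Icc 0 a) :=
    (continuousOn_survivalPrimitive ha0 ha1).mono (Icc_subset_Icc_left (by linarith))
  have hderiv : ∀ x ∈ Ioo 0 a,
      HasDerivAt (survivalPrimitive a) (4 * x ^ 2 / (1 + x) * fK x a) x := fun x hx =>
    hasDerivAt_survivalPrimitive ha0 ha1 (Ioo_subset_Ioo_left (by linarith) hx)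
  have hnonneg : ∀ x ∈ Ioo 0 a, 0 ≤ 4 * x ^ 2 / (1 + x) * fK x a := fun x ⟨hx0, hxa⟩ =>
    mul_nonneg (by positivity) (fK_nonneg a (by nlinarith))
  have hint : IntervalIntegrable (fun x => 4 * x ^ 2 / (1 + x) * fK x a) volume 0 a :=
    (intervalIntegrable_iff_integrableOn_Ioc_of_le ha0.le).2
      (integrableOn_deriv_of_nonneg hcont hderiv hnonneg)
  rw [integral_eq_sub_of_hasDerivAt_of_le ha0.le hcont hderiv hint,
    survivalPrimitive_self ha0 ha1, survivalPrimitive_zero ha0, N]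
  have hq : 0 < 1 - a ^ 2 := by nlinarith
  have hq' : √(1 - a ^ 2) ^ 2 = 1 - a ^ 2 := sq_sqrt hq.le
  have : √(1 - a ^ 2) ≠ 0 := (sqrt_pos.2 hq).ne'
  generalize √(1 - a ^ 2) = q at *
  rw [show a ^ 2 = 1 - q ^ 2 by linarith]
  field_simp
  ring
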